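/- arXiv:2407.03788 — 3 statements merged into one kernel-verified Lean document; each statement's English description precedes it below -/
import Mathlib

section
/- Let τ > 0 be a temperature, μ ≥ 0 a margin, B ≥ 2 an integer, i a fixed index, and let λ_{i,j} ∈ ℝ be given angles for each j ≠ i; set S = Σ_{j≠i} exp(cos(λ_{i,j})/τ) (a positive constant independent of the positive-pair angle). Define, as functions of the positive-pair angle λ, the contrastive loss Lc(λ) = -log( exp(cos(λ)/τ) / (exp(cos(λ)/τ) + S) ) and the subtractive angular margin contrastive loss La(λ) = -log( exp(cos(max(λ - μ, 0))/τ) / (exp(cos(max(λ - μ, 0))/τ) + S) ). Then for every λ with 0 ≤ λ ≤ π/2, both La and Lc are differentiable at λ and |La′(λ)| ≤ |Lc′(λ)|. -/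
/-!
Both losses are `contrastiveLoss τ S` composed with a cosine, and
`d/dc contrastiveLoss τ S c = -S / (τ (exp (c / τ) + S))`, whose size decreases in `c`.
On `[0, π/2]` the margin replaces `λ` by `m = max (λ - μ) 0 ≤ λ`, so `sin m ≤ sin λ` and
`cos m ≥ cos λ`; the chain rule then bounds both factors of `|La'|` by those of `|Lc'|`.
The clamp `max · 0` is harmless for differentiability because `cos' 0 = 0`.
-/

open Real Set Filter Topology

theorem HasDerivAt.comp_max_const {f f' : ℝ → ℝ} {a : ℝ} (hf : ∀ x, HasDerivAt f (f' x) x)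
    (ha : f' a = 0) (x : ℝ) : HasDerivAt (fun t => f (max t a)) (f' (max x a)) x := by
  rcases lt_trichotomy x a with hxa | rfl | hxa
  · rw [max_eq_right hxa.le, ha]
    refine (hasDerivAt_const x (f a)).congr_of_eventuallyEq ?_
    filter_upwards [Iio_mem_nhds hxa] with t ht
    rw [max_eq_right (le_of_lt ht)]
  · rw [max_self, ← hasDerivWithinAt_univ, ← Iic_union_Ici]
    refine HasDerivWithinAt.union ?_ ?_
    · rw [ha]
      exact (hasDerivWithinAt_const x _ (f x)).congr (fun t ht => by rw [max_eq_right ht])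
        (by rw [max_self])
    · exact (hf x).hasDerivWithinAt.congr (fun t ht => by rw [max_eq_left ht])
        (by rw [max_self])
  · rw [max_eq_left hxa.le]
    refine (hf x).congr_of_eventuallyEq ?_
    filter_upwards [Ioi_mem_nhds hxa] with t ht
    rw [max_eq_left (le_of_lt ht)]

theorem hasDerivAt_cos_max_sub_zero (μ x : ℝ) :
    HasDerivAt (fun l => cos (max (l - μ) 0)) (-sin (max (x - μ) 0)) x :=
  HasDerivAt.comp_sub_const x μ
    (HasDerivAt.comp_max_const (f' := fun t => -sin t) hasDerivAt_cos (by simp) (x - μ))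

noncomputable def contrastiveLoss (τ S c : ℝ) : ℝ :=
  -log (exp (c / τ) / (exp (c / τ) + S))

theorem contrastiveLoss_eq {τ S : ℝ} (hS : 0 ≤ S) (c : ℝ) :
    contrastiveLoss τ S c = log (exp (c / τ) + S) - c / τ := by
  have hpos : 0 < exp (c / τ) + S := by positivity
  rw [contrastiveLoss, log_div (exp_pos _).ne' hpos.ne', log_exp]
  ring

theorem hasDerivAt_contrastiveLoss {τ S : ℝ} (hτ : τ ≠ 0) (hS : 0 ≤ S) (c : ℝ) :
    HasDerivAt (contrastiveLoss τ S) (-(S / (τ * (exp (c / τ) + S)))) c := by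
  have hpos : 0 < exp (c / τ) + S := by positivity
  have hlin : HasDerivAt (fun c => c / τ) (1 / τ) c := (hasDerivAt_id c).div_const τ
  have hlog := (((hasDerivAt_exp _).comp c hlin).add_const S).log hpos.ne'
  rw [funext (contrastiveLoss_eq hS)]
  refine (hlog.sub hlin).congr_deriv ?_
  simp only [Function.comp_apply]
  field_simp
  ring

theorem angular_margin_gradient_decay_general
    (τ μ : ℝ) (hτ : 0 < τ) (hμ : 0 ≤ μ)
    (B : ℕ) (i : Fin B) (angle : Fin B → ℝ)
    (S : ℝ)
    (hS : S = ∑ j ∈ Finset.univ.erase i, Real.exp (Real.cos (angle j) / τ))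
    (Lc La : ℝ → ℝ)
    (hLc : ∀ l : ℝ, Lc l =
      -Real.log (Real.exp (Real.cos l / τ) / (Real.exp (Real.cos l / τ) + S)))
    (hLa : ∀ l : ℝ, La l =
      -Real.log (Real.exp (Real.cos (max (l - μ) 0) / τ) /
        (Real.exp (Real.cos (max (l - μ) 0) / τ) + S))) :
    ∀ l : ℝ, 0 ≤ l → l ≤ Real.pi / 2 →
      DifferentiableAt ℝ La l ∧ DifferentiableAt ℝ Lc l ∧
        |deriv La l| ≤ |deriv Lc l| := by
  intro l hl0 hlπ
  have hS0 : 0 ≤ S := hS ▸ Finset.sum_nonneg fun j _ => (exp_pos _).le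
  set m := max (l - μ) 0
  have hm0 : 0 ≤ m := le_max_right _ _
  have hml : m ≤ l := max_le (by linarith) hl0
  have hLc' : HasDerivAt Lc (-(S / (τ * (exp (cos l / τ) + S))) * -sin l) l := by
    rw [funext hLc]
    exact (hasDerivAt_contrastiveLoss hτ.ne' hS0 _).comp l (hasDerivAt_cos l)
  have hLa' : HasDerivAt La (-(S / (τ * (exp (cos m / τ) + S))) * -sin m) l := by
    rw [funext hLa]
    exact (hasDerivAt_contrastiveLoss hτ.ne' hS0 _).comp l (hasDerivAt_cos_max_sub_zero μ l)
  refine ⟨hLa'.differentiableAt, hLc'.differentiableAt, ?_⟩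
  have hsin_m : 0 ≤ sin m := sin_nonneg_of_nonneg_of_le_pi hm0 (by linarith [pi_pos])
  have hsin : sin m ≤ sin l := sin_le_sin_of_le_of_le_pi_div_two (by linarith [pi_pos]) hlπ hml
  have hcos : cos l ≤ cos m := cos_le_cos_of_nonneg_of_le_pi hm0 (by linarith [pi_pos]) hml
  rw [hLa'.deriv, hLc'.deriv, neg_mul_neg, neg_mul_neg,
    abs_of_nonneg (by positivity), abs_of_nonneg (by positivity [hsin_m.trans hsin])]
  gcongr

/-- Theorem 1 of the paper: the subtractive angular margin decays the gradient norm.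
With `S` the (positive-pair-independent) sum over negative pairs in a batch of size
`B ≥ 2`, both the margined loss `La` and the plain contrastive loss `Lc` are
differentiable on `[0, π/2]` and `|La'| ≤ |Lc'|` there. -/
theorem angular_margin_gradient_decay
    (τ μ : ℝ) (hτ : 0 < τ) (hμ : 0 ≤ μ)
    (B : ℕ) (hB : 2 ≤ B) (i : Fin B) (angle : Fin B → ℝ)
    (S : ℝ)
    (hS : S = ∑ j ∈ Finset.univ.erase i, Real.exp (Real.cos (angle j) / τ))
    (Lc La : ℝ → ℝ)
    (hLc : ∀ l : ℝ, Lc l =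
      -Real.log (Real.exp (Real.cos l / τ) / (Real.exp (Real.cos l / τ) + S)))
    (hLa : ∀ l : ℝ, La l =
      -Real.log (Real.exp (Real.cos (max (l - μ) 0) / τ) /
        (Real.exp (Real.cos (max (l - μ) 0) / τ) + S))) :
    ∀ l : ℝ, 0 ≤ l → l ≤ Real.pi / 2 →
      DifferentiableAt ℝ La l ∧ DifferentiableAt ℝ Lc l ∧
        |deriv La l| ≤ |deriv Lc l| :=
  angular_margin_gradient_decay_general τ μ hτ hμ B i angle S hS Lc La hLc hLa
end

section
/- Let τ > 0, μ ≥ 0, S > 0, and define Lc(λ) = -log( exp(cos(λ)/τ) / (exp(cos(λ)/τ) + S) ) and La(λ) = -log( exp(cos(max(λ - μ, 0))/τ) / (exp(cos(max(λ - μ, 0))/τ) + S) ). Then for every λ with μ < λ < π (so that sin(λ) ≠ 0 and Lc′(λ) ≠ 0), the ratio of derivatives satisfies La′(λ) / Lc′(λ) = (sin(λ - μ)/sin(λ)) · (exp(cos(λ)/τ) + S) / (exp(cos(λ - μ)/τ) + S). -/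
/-!
Both losses are the logit loss `z ↦ -log (eᶻ / (eᶻ + S)) = log (eᶻ + S) - z`, whose derivative is
`-S / (eᶻ + S)`, composed with `λ ↦ cos λ / τ` and, for `λ > μ`, with `λ ↦ cos (λ - μ) / τ`.
The chain rule gives `Lc' λ = sin λ · S / (τ (e^{cos λ / τ} + S))` and the same expression at
`λ - μ` for `La'`; in the quotient the factors `S` and `τ` cancel.
-/

open Real Filter Topology

noncomputable def logitLoss (S z : ℝ) : ℝ := -log (exp z / (exp z + S))

lemma logitLoss_eq_log_add_sub {S : ℝ} (hS : 0 ≤ S) (z : ℝ) :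
    logitLoss S z = log (exp z + S) - z := by
  rw [logitLoss, log_div (exp_pos z).ne' (by positivity), log_exp]
  ring

lemma hasDerivAt_logitLoss {S : ℝ} (hS : 0 ≤ S) (z : ℝ) :
    HasDerivAt (logitLoss S) (-S / (exp z + S)) z := by
  have hpos : 0 < exp z + S := by positivity
  rw [funext (logitLoss_eq_log_add_sub hS)]
  refine ((((hasDerivAt_exp z).add_const S).log hpos.ne').sub (hasDerivAt_id' z)).congr_deriv ?_
  field_simp
  ring

lemma hasDerivAt_logitLoss_cos_div {S : ℝ} (hS : 0 ≤ S) (τ x : ℝ) :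
    HasDerivAt (fun y => logitLoss S (cos y / τ))
      (sin x * S / (τ * (exp (cos x / τ) + S))) x := by
  refine ((hasDerivAt_logitLoss hS (cos x / τ)).comp x
    ((hasDerivAt_cos x).div_const τ)).congr_deriv ?_
  rw [div_mul_div_comm, neg_mul_neg, mul_comm τ, mul_comm (sin x)]

theorem angular_margin_deriv_ratio_general
    (τ μ S : ℝ) (hτ : 0 < τ) (hS : 0 < S)
    (Lc La : ℝ → ℝ)
    (hLc : ∀ l : ℝ, Lc l =
      -Real.log (Real.exp (Real.cos l / τ) / (Real.exp (Real.cos l / τ) + S)))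
    (hLa : ∀ l : ℝ, La l =
      -Real.log (Real.exp (Real.cos (max (l - μ) 0) / τ) /
        (Real.exp (Real.cos (max (l - μ) 0) / τ) + S))) :
    ∀ l : ℝ, μ < l → l < Real.pi →
      deriv La l / deriv Lc l =
        (Real.sin (l - μ) / Real.sin l) *
          ((Real.exp (Real.cos l / τ) + S) /
            (Real.exp (Real.cos (l - μ) / τ) + S)) := by
  intro l hμl _
  have hLc_deriv : deriv Lc l = sin l * S / (τ * (exp (cos l / τ) + S)) := by
    rw [show Lc = fun y => logitLoss S (cos y / τ) from funext hLc]
    exact (hasDerivAt_logitLoss_cos_div hS.le τ l).deriv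
  have hLa_eventually : La =ᶠ[𝓝 l] fun y => logitLoss S (cos (y - μ) / τ) := by
    filter_upwards [lt_mem_nhds hμl] with y hy
    rw [hLa y, max_eq_left (sub_nonneg.mpr hy.le), logitLoss]
  have hLa_deriv : deriv La l = sin (l - μ) * S / (τ * (exp (cos (l - μ) / τ) + S)) := by
    rw [hLa_eventually.deriv_eq]
    exact ((hasDerivAt_logitLoss_cos_div hS.le τ (l - μ)).comp_sub_const l μ).deriv
  have hA : exp (cos (l - μ) / τ) + S ≠ 0 := by positivity
  have hB : exp (cos l / τ) + S ≠ 0 := by positivity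
  rw [hLa_deriv, hLc_deriv]
  -- With the inverses distributed, `(sin l)⁻¹` is a plain factor and need not be cancelled.
  simp only [div_eq_mul_inv, mul_inv]
  field_simp

/-- Ratio of the margined to the unmargined derivative for `μ < λ < π`:
`La'(λ)/Lc'(λ) = (sin(λ-μ)/sin λ) · (exp(cos λ/τ)+S)/(exp(cos(λ-μ)/τ)+S)`. -/
theorem angular_margin_deriv_ratio
    (τ μ S : ℝ) (hτ : 0 < τ) (hμ : 0 ≤ μ) (hS : 0 < S)
    (Lc La : ℝ → ℝ)
    (hLc : ∀ l : ℝ, Lc l =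
      -Real.log (Real.exp (Real.cos l / τ) / (Real.exp (Real.cos l / τ) + S)))
    (hLa : ∀ l : ℝ, La l =
      -Real.log (Real.exp (Real.cos (max (l - μ) 0) / τ) /
        (Real.exp (Real.cos (max (l - μ) 0) / τ) + S))) :
    ∀ l : ℝ, μ < l → l < Real.pi →
      deriv La l / deriv Lc l =
        (Real.sin (l - μ) / Real.sin l) *
          ((Real.exp (Real.cos l / τ) + S) /
            (Real.exp (Real.cos (l - μ) / τ) + S)) :=
  angular_margin_deriv_ratio_general τ μ S hτ hS Lc La hLc hLa
end

section
/- Let τ > 0, μ ≥ 0, S > 0, and define Lc(λ) = -log( exp(cos(λ)/τ) / (exp(cos(λ)/τ) + S) ) and La(λ) = -log( exp(cos(max(λ - μ, 0))/τ) / (exp(cos(max(λ - μ, 0))/τ) + S) ). Then for every λ with 0 ≤ λ ≤ π/2, both derivatives exist and satisfy 0 ≤ La′(λ) ≤ Lc′(λ). -/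
/-!
Both losses are `φ ∘ g` for the negative log-softmax `φ(c) = -log (e^{c/τ} / (e^{c/τ} + S))`,
with `g = cos` for `Lc` and `g(λ) = cos (max (λ - μ) 0)` for `La`. Since `-φ'` is the positive,
decreasing weight `w(c) = S / (τ (e^{c/τ} + S))`, the chain rule gives `Lc'(λ) = w(cos λ) sin λ`
and `La'(λ) = w(cos m) sin m` with `m = max (λ - μ) 0 ∈ [0, λ]`. On `[0, π/2]` we have
`0 ≤ sin m ≤ sin λ` and `cos λ ≤ cos m`, hence `w(cos m) ≤ w(cos λ)`, and the inequality
follows factor by factor.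
-/

open Real Set Filter Topology

noncomputable section

def negLogSoftmax (τ S c : ℝ) : ℝ :=
  -log (exp (c / τ) / (exp (c / τ) + S))

def softmaxWeight (τ S c : ℝ) : ℝ :=
  S / (τ * (exp (c / τ) + S))

end

section Softmax

variable {τ S : ℝ}

lemma negLogSoftmax_eq (hS : 0 ≤ S) (c : ℝ) :
    negLogSoftmax τ S c = log (exp (c / τ) + S) - c / τ := by
  rw [negLogSoftmax, log_div (exp_pos _).ne' (by positivity), log_exp]
  ring

lemma hasDerivAt_negLogSoftmax (hτ : τ ≠ 0) (hS : 0 ≤ S) (c : ℝ) :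
    HasDerivAt (negLogSoftmax τ S) (-softmaxWeight τ S c) c := by
  have hpos : exp (c / τ) + S ≠ 0 := by positivity
  have hlin : HasDerivAt (fun x => x / τ) (1 / τ) c := (hasDerivAt_id c).div_const τ
  rw [funext (negLogSoftmax_eq hS)]
  refine (((hlin.exp).add_const S).log hpos |>.sub hlin).congr_deriv ?_
  rw [softmaxWeight]
  field_simp
  ring

lemma softmaxWeight_nonneg (hτ : 0 < τ) (hS : 0 ≤ S) (c : ℝ) :
    0 ≤ softmaxWeight τ S c := by
  unfold softmaxWeight
  positivity

lemma antitone_softmaxWeight (hτ : 0 < τ) (hS : 0 ≤ S) : Antitone (softmaxWeight τ S) := by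
  intro c d hcd
  unfold softmaxWeight
  gcongr

end Softmax

lemma hasDerivAt_cos_max_zero (t : ℝ) :
    HasDerivAt (fun x => cos (max x 0)) (-sin (max t 0)) t := by
  rcases lt_trichotomy t 0 with ht | rfl | ht
  · have hconst : (fun x => cos (max x 0)) =ᶠ[𝓝 t] fun _ => (1 : ℝ) := by
      filter_upwards [eventually_lt_nhds ht] with x hx
      rw [max_eq_right hx.le, cos_zero]
    rw [max_eq_right ht.le, sin_zero, neg_zero]
    exact (hasDerivAt_const t 1).congr_of_eventuallyEq hconst
  · -- Both one-sided derivatives at the kink vanish: `1` is constant and `cos' 0 = -sin 0 = 0`.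
    rw [max_self, sin_zero, neg_zero, ← hasDerivWithinAt_univ, ← Iic_union_Ici]
    refine HasDerivWithinAt.union ?_ ?_
    · refine (hasDerivAt_const (0 : ℝ) (1 : ℝ)).hasDerivWithinAt.congr_of_mem ?_ self_mem_Iic
      intro x hx
      rw [max_eq_right hx, cos_zero]
    · have hcos := (hasDerivAt_cos 0).hasDerivWithinAt (s := Ici 0)
      rw [sin_zero, neg_zero] at hcos
      refine hcos.congr_of_mem ?_ self_mem_Ici
      intro x hx
      rw [max_eq_left hx]
  · have hcos : (fun x => cos (max x 0)) =ᶠ[𝓝 t] cos := by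
      filter_upwards [eventually_gt_nhds ht] with x hx
      rw [max_eq_left hx.le]
    rw [max_eq_left ht.le]
    exact (hasDerivAt_cos t).congr_of_eventuallyEq hcos

/-- Sign-resolved form of Theorem 1: on `[0, π/2]` both derivatives exist and
`0 ≤ La'(λ) ≤ Lc'(λ)`. -/
theorem angular_margin_gradient_decay_signed
    (τ μ S : ℝ) (hτ : 0 < τ) (hμ : 0 ≤ μ) (hS : 0 < S)
    (Lc La : ℝ → ℝ)
    (hLc : ∀ l : ℝ, Lc l =
      -Real.log (Real.exp (Real.cos l / τ) / (Real.exp (Real.cos l / τ) + S)))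
    (hLa : ∀ l : ℝ, La l =
      -Real.log (Real.exp (Real.cos (max (l - μ) 0) / τ) /
        (Real.exp (Real.cos (max (l - μ) 0) / τ) + S))) :
    ∀ l : ℝ, 0 ≤ l → l ≤ Real.pi / 2 →
      DifferentiableAt ℝ La l ∧ DifferentiableAt ℝ Lc l ∧
        0 ≤ deriv La l ∧ deriv La l ≤ deriv Lc l := by
  intro l hl0 hl2
  set m := max (l - μ) 0
  have hm0 : 0 ≤ m := le_max_right _ _
  have hml : m ≤ l := max_le (by linarith) hl0
  have hφ := hasDerivAt_negLogSoftmax hτ.ne' hS.le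
  have hdc : HasDerivAt Lc (softmaxWeight τ S (cos l) * sin l) l := by
    rw [funext hLc]
    exact ((hφ (cos l)).comp l (hasDerivAt_cos l)).congr_deriv (neg_mul_neg _ _)
  have hda : HasDerivAt La (softmaxWeight τ S (cos m) * sin m) l := by
    rw [funext hLa]
    have hg := (hasDerivAt_cos_max_zero (l - μ)).comp_sub_const l μ
    exact ((hφ (cos m)).comp l hg).congr_deriv (neg_mul_neg _ _)
  have hsin_m : 0 ≤ sin m := sin_nonneg_of_nonneg_of_le_pi hm0 (by linarith [pi_pos])
  refine ⟨hda.differentiableAt, hdc.differentiableAt, ?_, ?_⟩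
  · rw [hda.deriv]
    exact mul_nonneg (softmaxWeight_nonneg hτ hS.le _) hsin_m
  · rw [hda.deriv, hdc.deriv]
    exact mul_le_mul
      (antitone_softmaxWeight hτ hS.le
        (cos_le_cos_of_nonneg_of_le_pi hm0 (by linarith [pi_pos]) hml))
      (sin_le_sin_of_le_of_le_pi_div_two (by linarith [pi_pos]) hl2 hml)
      hsin_m (softmaxWeight_nonneg hτ hS.le _)
end
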